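/- Dual mean reversiblization: Let ℳ : [0,∞)×[0,∞) → [0,∞) satisfy min{a,b} ≤ ℳ(a,b) ≤ max{a,b}, ℳ(a,b) = ℳ(b,a), and ℳ(λa, λb) = λ·ℳ(a,b) for all a, b, λ ≥ 0. Define g : [0,∞) → [0,∞) by g(t) = 1/ℳ(1/t, 1) for t > 0 and g(0) = 0. Then g is a balancing function, i.e. g(t) = t·g(1/t) for all t > 0, and consequently for every L ∈ ℒ the dual mean reversiblization D_ℳ := F_g belongs to ℒ(π). -/

import Mathlib

open Finset

noncomputable section

variable {X : Type*} [Fintype X] [DecidableEq X]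

/-- Build a matrix with prescribed off-diagonal entries and diagonal entries
chosen so that every row sums to zero. -/
def rowZero (F : X → X → ℝ) : X → X → ℝ :=
  fun x y => if x = y then -(∑ z ∈ Finset.univ.erase x, F x z) else F x y

/-- `L` is a Markov infinitesimal generator: nonnegative off-diagonal entries
and zero row sums. -/
def IsGen (L : X → X → ℝ) : Prop :=
  (∀ x y, x ≠ y → 0 ≤ L x y) ∧ (∀ x, ∑ y, L x y = 0)

/-- `L` is a `π`-reversible Markov generator, i.e. `L ∈ ℒ(π)`. -/
def IsRev (π : X → ℝ) (L : X → X → ℝ) : Prop :=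
  IsGen L ∧ ∀ x y, π x * L x y = π y * L y x

/-- `π` is a probability distribution with full support. -/
def IsProb (π : X → ℝ) : Prop := (∀ x, 0 < π x) ∧ ∑ x, π x = 1

/-- The `π`-dual `L_π` of `L`: off-diagonal entries `π(y)L(y,x)/π(x)`,
diagonal entries make row sums zero. -/
def dual (π : X → ℝ) (L : X → X → ℝ) : X → X → ℝ :=
  rowZero (fun x y => π y * L y x / π x)

/-- The `f`-divergence between generators: `Df f π M L = D_f(M‖L)`.
(The convention `0·f(a/0) = 0` holds automatically since `a/0 = 0` and
the factor `L x y = 0` kills the term.) -/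
def Df (f : ℝ → ℝ) (π : X → ℝ) (M L : X → X → ℝ) : ℝ :=
  ∑ x, π x * ∑ y ∈ Finset.univ.erase x, L x y * f (M x y / L x y)

/-- The locally-balanced transformation `F_g` of `L`: for `x ≠ y`,
`F_g(x,y) = L(x,y)` if `L(x,y) = L_π(x,y)`;
`F_g(x,y) = g(0)·L_π(x,y)` if `L(x,y) = 0` (and then `L_π(x,y) > 0`);
`F_g(x,y) = g(L_π(x,y)/L(x,y))·L(x,y)` otherwise;
diagonal entries make row sums zero. -/
def Fg (π : X → ℝ) (g : ℝ → ℝ) (L : X → X → ℝ) : X → X → ℝ :=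
  rowZero (fun x y =>
    if L x y = dual π L x y then L x y
    else if L x y = 0 then g 0 * dual π L x y
    else g (dual π L x y / L x y) * L x y)

/-- The balancing function associated with the dual mean of a mean function
`ℳ`: `g(t) = 1/ℳ(1/t, 1)` for `t > 0` and `g(0) = 0`. -/
def gDual (Mn : ℝ → ℝ → ℝ) : ℝ → ℝ := fun t =>
  if t = 0 then 0 else (Mn (1 / t) 1)⁻¹

lemma rowZero_apply_ne (F : X → X → ℝ) {x y : X} (h : x ≠ y) :
    rowZero F x y = F x y := if_neg h

lemma rowZero_rowsum (F : X → X → ℝ) (x : X) : ∑ y, rowZero F x y = 0 := by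
  rw [← Finset.add_sum_erase Finset.univ _ (Finset.mem_univ x),
    show rowZero F x x = -(∑ z ∈ Finset.univ.erase x, F x z) from if_pos rfl,
    Finset.sum_congr rfl
      (fun y hy => rowZero_apply_ne F (Ne.symm (Finset.ne_of_mem_erase hy)))]
  ring

lemma Fg_apply_ne (π : X → ℝ) (g : ℝ → ℝ) (L : X → X → ℝ) {x y : X} (h : x ≠ y) :
    Fg π g L x y =
      if L x y = dual π L x y then L x y
      else if L x y = 0 then g 0 * dual π L x y
      else g (dual π L x y / L x y) * L x y := if_neg h

lemma dual_apply_ne (π : X → ℝ) (L : X → X → ℝ) {x y : X} (h : x ≠ y) :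
    dual π L x y = π y * L y x / π x := if_neg h

/-- **Dual mean reversiblization** (Theorem 4.4): if `ℳ` is a mean function
(`min ≤ ℳ ≤ max`), symmetric and homogeneous on `[0,∞)`, then `gDual ℳ` is a
balancing function, i.e. `g(t) = t·g(1/t)` for `t > 0`, and consequently for
every `L ∈ ℒ` the dual mean reversiblization `D_ℳ = F_g` belongs to `ℒ(π)`. -/
theorem dual_mean_reversiblization (π : X → ℝ) (hπ : IsProb π)
    (Mn : ℝ → ℝ → ℝ)
    (hmean : ∀ a b : ℝ, 0 ≤ a → 0 ≤ b → min a b ≤ Mn a b ∧ Mn a b ≤ max a b)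
    (hsymm : ∀ a b : ℝ, 0 ≤ a → 0 ≤ b → Mn a b = Mn b a)
    (hhom : ∀ a b lam : ℝ, 0 ≤ a → 0 ≤ b → 0 ≤ lam →
      Mn (lam * a) (lam * b) = lam * Mn a b) :
    (∀ t : ℝ, 0 < t → gDual Mn t = t * gDual Mn (1 / t)) ∧
    (∀ L : X → X → ℝ, IsGen L → IsRev π (Fg π (gDual Mn) L)) := by
  obtain ⟨hπpos, -⟩ := hπ
  have hMnpos : ∀ t : ℝ, 0 < t → 0 < Mn t 1 := fun t ht =>
    lt_of_lt_of_le (lt_min ht one_pos) ((hmean t 1 ht.le zero_le_one).1)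
  have hg0 : gDual Mn 0 = 0 := by simp [gDual]
  have hgnn : ∀ t : ℝ, 0 ≤ t → 0 ≤ gDual Mn t := by
    intro t ht
    rcases eq_or_lt_of_le ht with h | h
    · simp [gDual, ← h]
    · have h1 : (0:ℝ) < 1 / t := by positivity
      simp only [gDual, if_neg h.ne']
      exact inv_nonneg.mpr (hMnpos _ h1).le
  have hbal : ∀ t : ℝ, 0 < t → gDual Mn t = t * gDual Mn (1 / t) := by
    intro t ht
    have ht' : (0:ℝ) < 1 / t := by positivity
    have h1 : Mn t 1 = t * Mn (1 / t) 1 := by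
      have := hhom (1 / t) 1 t ht'.le zero_le_one ht.le
      rw [mul_one_div_cancel ht.ne', mul_one] at this
      rw [hsymm t 1 ht.le zero_le_one, this]
    simp only [gDual, if_neg ht.ne', if_neg ht'.ne', one_div_one_div]
    rw [h1, mul_inv, ← mul_assoc, mul_inv_cancel₀ ht.ne', one_mul]
  refine ⟨hbal, ?_⟩
  rintro L ⟨hLnn, -⟩
  have hrev : ∀ x y, π x * Fg π (gDual Mn) L x y = π y * Fg π (gDual Mn) L y x := by
    intro x y
    by_cases hxy : x = y
    · subst hxy; rfl
    have hxy' : y ≠ x := Ne.symm hxy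
    rw [Fg_apply_ne π _ L hxy, Fg_apply_ne π _ L hxy',
      dual_apply_ne π L hxy, dual_apply_ne π L hxy']
    have hπx := (hπpos x).ne'
    have hπy := (hπpos y).ne'
    by_cases h1 : L x y = π y * L y x / π x
    · have h1' : L y x = π x * L x y / π y := by
        field_simp at h1 ⊢; linarith
      rw [if_pos h1, if_pos h1', h1]
      field_simp
    · have h1' : ¬ (L y x = π x * L x y / π y) := by
        intro h; apply h1
        field_simp at h ⊢; linarith
      rw [if_neg h1, if_neg h1']
      by_cases h2 : L x y = 0
      · have hLyx : L y x ≠ 0 := by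
          intro h; apply h1; rw [h2, h]; simp
        rw [if_pos h2, if_neg hLyx, h2, hg0]
        simp [hg0]
      · by_cases h3 : L y x = 0
        · rw [if_neg h2, if_pos h3, h3, hg0]
          simp [zero_div, hg0]
        · rw [if_neg h2, if_neg h3]
          have hLxy : 0 < L x y := lt_of_le_of_ne (hLnn x y hxy) (Ne.symm h2)
          have hLyx : 0 < L y x := lt_of_le_of_ne (hLnn y x hxy') (Ne.symm h3)
          have tpos : 0 < π y * L y x / π x / L x y :=
            div_pos (div_pos (mul_pos (hπpos y) hLyx) (hπpos x)) hLxy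
          have hst : π x * L x y / π y / L y x = 1 / (π y * L y x / π x / L x y) := by
            field_simp
          rw [hst, hbal _ tpos]
          field_simp
  refine ⟨⟨fun x y hxy => ?_, fun x => rowZero_rowsum _ x⟩, hrev⟩
  rw [Fg_apply_ne π _ L hxy, dual_apply_ne π L hxy]
  by_cases h1 : L x y = π y * L y x / π x
  · rw [if_pos h1]; exact hLnn x y hxy
  · rw [if_neg h1]
    by_cases h2 : L x y = 0
    · rw [if_pos h2, hg0, zero_mul]
    · rw [if_neg h2]
      have hLxy : 0 < L x y := lt_of_le_of_ne (hLnn x y hxy) (Ne.symm h2)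
      have hd : 0 ≤ π y * L y x / π x :=
        div_nonneg (mul_nonneg (hπpos y).le (hLnn y x (Ne.symm hxy))) (hπpos x).le
      exact mul_nonneg (hgnn _ (div_nonneg hd hLxy.le)) hLxy.le

end
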